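/- arXiv:1807.04074 — 2 statements merged into one kernel-verified Lean document; each statement's English description precedes it below -/
import Mathlib

section
/- Let 1 < γ ≤ 2, positive weights w₁,…,w_N, and reals c₁,…,c_N (with c_j = φᵢ - φ(x_j)). Define f(h) = (ρ̄/(γ-1)) · [Σ w_j ((γ-1)(h + c_j)/γ)^(γ/(γ-1))] / [Σ w_j ((γ-1)(h + c_j)/γ)^(1/(γ-1))] for h with h + c_j > 0 for all j. If for all such h the ratio max_j(h + c_j)/min_j(h + c_j) < √γ, then f is strictly increasing on its domain. -/
/-!
Put `t_j = (γ - 1)(h + c_j)/γ`, `p = 1/(γ - 1)` and `S_q = ∑ w_j t_j^q`, so that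
`f = ρ̄/(γ - 1) · S_{p+1}/S_p`. Since `t_j' = (γ - 1)/γ`, the sign of `f'` is that of
`(p + 1) S_p² - p S_{p+1} S_{p-1}`. Expanding `S_{p+1} S_{p-1} = ∑_{j,k} w_j w_k t_j^p t_k^p (t_j/t_k)`
and comparing with `S_p² = ∑_{j,k} w_j w_k t_j^p t_k^p` term by term, the bound `t_j/t_k < √γ < γ`
gives `S_{p+1} S_{p-1} < γ S_p² = (p + 1)/p · S_p²`, so `f' > 0`.
-/

open Finset

variable {ι : Type*} [Fintype ι]

noncomputable def weightedPowerSum (w t : ι → ℝ) (q : ℝ) : ℝ := ∑ j, w j * t j ^ q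

lemma weightedPowerSum_pos [Nonempty ι] {w t : ι → ℝ} (hw : ∀ j, 0 < w j) (ht : ∀ j, 0 < t j)
    (q : ℝ) : 0 < weightedPowerSum w t q :=
  sum_pos (fun j _ => mul_pos (hw j) (Real.rpow_pos_of_pos (ht j) q)) univ_nonempty

lemma weightedPowerSum_add_one_mul_sub_one_lt [Nonempty ι] {w t : ι → ℝ} (hw : ∀ j, 0 < w j)
    (ht : ∀ j, 0 < t j) {r : ℝ} (hr : ∀ j k, t j < r * t k) (q : ℝ) :
    weightedPowerSum w t (q + 1) * weightedPowerSum w t (q - 1) <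
      r * weightedPowerSum w t q ^ 2 := by
  simp only [weightedPowerSum]
  rw [sq, sum_mul_sum, sum_mul_sum]
  simp only [mul_sum]
  refine sum_lt_sum_of_nonempty univ_nonempty fun j _ =>
    sum_lt_sum_of_nonempty univ_nonempty fun k _ => ?_
  rw [Real.rpow_add (ht j), Real.rpow_sub (ht k), Real.rpow_one, Real.rpow_one]
  have hpos : 0 < w j * w k * (t j ^ q * t k ^ q) :=
    mul_pos (mul_pos (hw j) (hw k)) (mul_pos (Real.rpow_pos_of_pos (ht j) q)
      (Real.rpow_pos_of_pos (ht k) q))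
  calc w j * (t j ^ q * t j) * (w k * (t k ^ q / t k))
      = w j * w k * (t j ^ q * t k ^ q) * (t j / t k) := by ring
    _ < w j * w k * (t j ^ q * t k ^ q) * r :=
      mul_lt_mul_of_pos_left ((div_lt_iff₀ (ht k)).2 (hr j k)) hpos
    _ = r * (w j * t j ^ q * (w k * t k ^ q)) := by ring

lemma hasDerivAt_weightedPowerSum_affine (w c : ι → ℝ) (κ q : ℝ) {x : ℝ}
    (hx : ∀ j, κ * (x + c j) ≠ 0) :
    HasDerivAt (fun y => weightedPowerSum w (fun j => κ * (y + c j)) q)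
      (κ * q * weightedPowerSum w (fun j => κ * (x + c j)) (q - 1)) x := by
  have hterm : ∀ j ∈ (univ : Finset ι), HasDerivAt (fun y => w j * (κ * (y + c j)) ^ q)
      (w j * (κ * 1 * q * (κ * (x + c j)) ^ (q - 1))) x := fun j _ =>
    ((((hasDerivAt_id x).add_const (c j)).const_mul κ).rpow_const (Or.inl (hx j))).const_mul (w j)
  refine (HasDerivAt.fun_sum hterm).congr_deriv ?_
  simp only [weightedPowerSum, mul_sum]
  exact sum_congr rfl fun j _ => by ring

theorem strictMonoOn_weightedPowerSum_div [Nonempty ι] {w c : ι → ℝ} (hw : ∀ j, 0 < w j)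
    {κ p r : ℝ} (hκ : 0 < κ) (hp : 0 < p) (hr : p * r ≤ p + 1)
    (hratio : ∀ x, (∀ j, 0 < x + c j) → ∀ j k, x + c j < r * (x + c k)) :
    StrictMonoOn (fun x => weightedPowerSum w (fun j => κ * (x + c j)) (p + 1) /
      weightedPowerSum w (fun j => κ * (x + c j)) p) {x | ∀ j, 0 < x + c j} := by
  set D := {x : ℝ | ∀ j, 0 < x + c j}
  have hconvex : Convex ℝ D :=
    Set.OrdConnected.convex ⟨fun x hx _ _ z hz j => by linarith [hx j, hz.1]⟩
  have hderiv : ∀ x ∈ D, HasDerivAt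
      (fun x => weightedPowerSum w (fun j => κ * (x + c j)) (p + 1) /
        weightedPowerSum w (fun j => κ * (x + c j)) p)
      ((κ * (p + 1) * weightedPowerSum w (fun j => κ * (x + c j)) p *
          weightedPowerSum w (fun j => κ * (x + c j)) p -
        weightedPowerSum w (fun j => κ * (x + c j)) (p + 1) *
          (κ * p * weightedPowerSum w (fun j => κ * (x + c j)) (p - 1))) /
        weightedPowerSum w (fun j => κ * (x + c j)) p ^ 2) x := by
    intro x hx
    have ht : ∀ j, κ * (x + c j) ≠ 0 := fun j => (mul_pos hκ (hx j)).ne'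
    have hnum := hasDerivAt_weightedPowerSum_affine w c κ (p + 1) ht
    rw [add_sub_cancel_right] at hnum
    exact hnum.div (hasDerivAt_weightedPowerSum_affine w c κ p ht)
      (weightedPowerSum_pos hw (fun j => mul_pos hκ (hx j)) p).ne'
  refine strictMonoOn_of_deriv_pos hconvex
    (fun x hx => (hderiv x hx).continuousAt.continuousWithinAt) fun x hx => ?_
  have hxD : x ∈ D := interior_subset hx
  have ht : ∀ j, 0 < κ * (x + c j) := fun j => mul_pos hκ (hxD j)
  have hlt := weightedPowerSum_add_one_mul_sub_one_lt hw ht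
    (fun j k => by nlinarith [hratio x hxD j k]) p
  have hS := weightedPowerSum_pos hw ht p
  rw [(hderiv x hxD).deriv]
  apply div_pos _ (by positivity)
  nlinarith [mul_lt_mul_of_pos_left hlt (mul_pos hκ hp), mul_le_mul_of_nonneg_right hr (sq_nonneg
    (weightedPowerSum w (fun j => κ * (x + c j)) p))]

theorem stmt_7_general (γ : ℝ) (hγ1 : 1 < γ)
    (N : ℕ) (hN : 1 ≤ N) (w c : Fin N → ℝ)
    (hw : ∀ j, 0 < w j) (ρbar : ℝ) (hρbar : 0 < ρbar)
    (f : ℝ → ℝ)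
    (hf : ∀ h, (∀ j, 0 < h + c j) →
      f h = (ρbar / (γ - 1)) *
        (∑ j, w j * ((γ - 1) * (h + c j) / γ) ^ (γ / (γ - 1))) /
        (∑ j, w j * ((γ - 1) * (h + c j) / γ) ^ (1 / (γ - 1))))
    (hratio : ∀ h, (∀ j, 0 < h + c j) →
      ∀ j k, h + c j < Real.sqrt γ * (h + c k)) :
    StrictMonoOn f {h | ∀ j, 0 < h + c j} := by
  have : Nonempty (Fin N) := ⟨⟨0, hN⟩⟩
  have hγ0 : 0 < γ - 1 := by linarith
  have hsqrt : Real.sqrt γ < γ := by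
    nlinarith [Real.sq_sqrt (by linarith : (0 : ℝ) ≤ γ), Real.sqrt_nonneg γ]
  have hexp : γ / (γ - 1) = 1 / (γ - 1) + 1 := by field_simp; ring
  have hmono := strictMonoOn_weightedPowerSum_div hw (κ := (γ - 1) / γ) (p := 1 / (γ - 1))
    (r := γ) (by positivity) (by positivity) (by field_simp; linarith)
    fun x hx j k => (hratio x hx j k).trans (mul_lt_mul_of_pos_right hsqrt (hx k))
  intro x hx y hy hxy
  rw [hf x hx, hf y hy, mul_div_assoc, mul_div_assoc]
  refine mul_lt_mul_of_pos_left ?_ (by positivity)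
  convert hmono hx hy hxy using 1 <;> simp only [weightedPowerSum, hexp, mul_div_right_comm]

/-- If on its whole domain the ratio `max_j (h + c_j) / min_j (h + c_j)`
is less than `√γ`, then the cell-average matching function `f` is strictly
increasing on its domain, for `1 < γ ≤ 2`. -/
theorem stmt_7 (γ : ℝ) (hγ1 : 1 < γ) (hγ2 : γ ≤ 2)
    (N : ℕ) (hN : 1 ≤ N) (w c : Fin N → ℝ)
    (hw : ∀ j, 0 < w j) (ρbar : ℝ) (hρbar : 0 < ρbar)
    (f : ℝ → ℝ)
    (hf : ∀ h, (∀ j, 0 < h + c j) →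
      f h = (ρbar / (γ - 1)) *
        (∑ j, w j * ((γ - 1) * (h + c j) / γ) ^ (γ / (γ - 1))) /
        (∑ j, w j * ((γ - 1) * (h + c j) / γ) ^ (1 / (γ - 1))))
    (hratio : ∀ h, (∀ j, 0 < h + c j) →
      ∀ j k, h + c j < Real.sqrt γ * (h + c k)) :
    StrictMonoOn f {h | ∀ j, 0 < h + c j} :=
  stmt_7_general γ hγ1 N hN w c hw ρbar hρbar f hf hratio
end

section
/- Suppose the hydrostatic equilibrium condition holds exactly in the discrete sense: for each cell i, the reconstructed interface states satisfy U_{i+1/2-} = U_{i+1/2+} = (ρ_eq(x_{i+1/2}), 0, ρe_eq(x_{i+1/2})), and the numerical flux 𝓕 is consistent (𝓕(u,u) = f(u)). Then for the Euler flux f(ρ, ρv, E) = (ρv, ρv² + p, (E+p)v) the interface flux equals F_{i+1/2} = (0, p_eq(x_{i+1/2}), 0), and with source term S̄ᵢ = (0, (p_eq(x_{i+1/2}) - p_eq(x_{i-1/2}))/Δx, 0), the semi-discrete residual -(F_{i+1/2} - F_{i-1/2})/Δx + S̄ᵢ vanishes identically. -/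
theorem consistent_flux_at_rest {P : ℝ × ℝ × ℝ → ℝ} {euler : ℝ × ℝ × ℝ → ℝ × ℝ × ℝ}
    (heuler : ∀ u : ℝ × ℝ × ℝ,
      euler u = (u.2.1, u.2.1 ^ 2 / u.1 + P u, (u.2.2 + P u) * u.2.1 / u.1))
    {F : ℝ × ℝ × ℝ → ℝ × ℝ × ℝ → ℝ × ℝ × ℝ} (hconsistent : ∀ u, F u u = euler u)
    (ρ E : ℝ) : F (ρ, 0, E) (ρ, 0, E) = (0, P (ρ, 0, E), 0) := by
  rw [hconsistent, heuler]
  simp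

theorem pressure_residual_eq_zero {K : Type*} [Field K] (Δx pL pR : K) :
    (-(Δx⁻¹)) • (((0 : K), pR, (0 : K)) - (0, pL, 0)) + (0, (pR - pL) / Δx, 0) = 0 := by
  simp only [Prod.ext_iff, Prod.smul_mk, Prod.mk_sub_mk, Prod.mk_add_mk, smul_eq_mul,
    Prod.fst_zero, Prod.snd_zero]
  refine ⟨by ring, by ring, by ring⟩

theorem stmt_10_general (P : ℝ × ℝ × ℝ → ℝ)
    (euler : ℝ × ℝ × ℝ → ℝ × ℝ × ℝ)
    (heuler : ∀ u : ℝ × ℝ × ℝ,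
      euler u = (u.2.1, u.2.1 ^ 2 / u.1 + P u, (u.2.2 + P u) * u.2.1 / u.1))
    (F : ℝ × ℝ × ℝ → ℝ × ℝ × ℝ → ℝ × ℝ × ℝ)
    (hconsistent : ∀ u, F u u = euler u)
    (Δx : ℝ)
    (xL xR : ℝ)
    (ρeq ρeeq peq : ℝ → ℝ)
    (hP : ∀ x, P (ρeq x, 0, ρeeq x) = peq x)
    -- interface states: reconstruction from the left and right coincide with
    -- the equilibrium point values
    (UL UR : ℝ × ℝ × ℝ)
    (hUL : UL = (ρeq xL, 0, ρeeq xL))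
    (hUR : UR = (ρeq xR, 0, ρeeq xR)) :
    F UR UR = (0, peq xR, 0) ∧
    (-(Δx⁻¹)) • (F UR UR - F UL UL) +
        ((0 : ℝ), (peq xR - peq xL) / Δx, (0 : ℝ)) = 0 := by
  have hR : F UR UR = (0, peq xR, 0) := by
    rw [hUR, consistent_flux_at_rest heuler hconsistent, hP]
  have hL : F UL UL = (0, peq xL, 0) := by
    rw [hUL, consistent_flux_at_rest heuler hconsistent, hP]
  refine ⟨hR, ?_⟩
  rw [hR, hL]
  exact pressure_residual_eq_zero Δx (peq xL) (peq xR)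

/-- Well-balanced property of the semi-discrete scheme: at discrete
hydrostatic equilibrium, consistent interface fluxes reduce to pure pressure
fluxes and the residual `-(F_{i+1/2} - F_{i-1/2})/Δx + S̄ᵢ` vanishes. -/
theorem stmt_10 (P : ℝ × ℝ × ℝ → ℝ)
    (euler : ℝ × ℝ × ℝ → ℝ × ℝ × ℝ)
    (heuler : ∀ u : ℝ × ℝ × ℝ,
      euler u = (u.2.1, u.2.1 ^ 2 / u.1 + P u, (u.2.2 + P u) * u.2.1 / u.1))
    (F : ℝ × ℝ × ℝ → ℝ × ℝ × ℝ → ℝ × ℝ × ℝ)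
    (hconsistent : ∀ u, F u u = euler u)
    (Δx : ℝ) (hΔx : 0 < Δx)
    (xL xR : ℝ)
    (ρeq ρeeq peq : ℝ → ℝ) (hρpos : ∀ x, 0 < ρeq x)
    (hP : ∀ x, P (ρeq x, 0, ρeeq x) = peq x)
    -- interface states: reconstruction from the left and right coincide with
    -- the equilibrium point values
    (UL UR : ℝ × ℝ × ℝ)
    (hUL : UL = (ρeq xL, 0, ρeeq xL))
    (hUR : UR = (ρeq xR, 0, ρeeq xR)) :
    F UR UR = (0, peq xR, 0) ∧
    (-(Δx⁻¹)) • (F UR UR - F UL UL) +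
        ((0 : ℝ), (peq xR - peq xL) / Δx, (0 : ℝ)) = 0 :=
  stmt_10_general P euler heuler F hconsistent Δx xL xR ρeq ρeeq peq hP UL UR hUL hUR
end
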